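/- Let (X,f) be a dynamical system with fⁿ quasi-continuous for all n ∈ ℕ, where X is a Baire space with a countable π-base. If (X,f) is topologically transitive (TT₊), then the set Trans_f of points with dense forward orbit contains a dense Gδ-set of X. -/

import Mathlib

open Set Function Topology

def QuasiCont {X Y : Type*} [TopologicalSpace X] [TopologicalSpace Y] (f : X → Y) : Prop :=
  ∀ (x : X) (W : Set Y), IsOpen W → f x ∈ W → ∀ U : Set X, IsOpen U → x ∈ U →
    ∃ V : Set X, IsOpen V ∧ V.Nonempty ∧ V ⊆ U ∧ f '' V ⊆ W

def Nplus {X : Type*} (f : X → X) (A B : Set X) : Set ℕ :=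
  {n : ℕ | (f^[n] '' A ∩ B).Nonempty}

def omegaLimitSet {X : Type*} [TopologicalSpace X] (f : X → X) (x : X) : Set X :=
  ⋂ k : ℕ, closure {y : X | ∃ n ≥ k, f^[n] x = y}

/-- TT: for all nonempty open U, V, N(U,V) = N₊(U,V) ∪ N₊(V,U) is nonempty. -/
def TTprop {X : Type*} [TopologicalSpace X] (f : X → X) : Prop :=
  ∀ U V : Set X, IsOpen U → U.Nonempty → IsOpen V → V.Nonempty →
    (Nplus f U V ∪ Nplus f V U).Nonempty

/-- TT₊ -/
def TTplus {X : Type*} [TopologicalSpace X] (f : X → X) : Prop :=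
  ∀ U V : Set X, IsOpen U → U.Nonempty → IsOpen V → V.Nonempty →
    (Nplus f U V).Nonempty

/-- X has a countable π-base. -/
def CountablePiBase (X : Type*) [TopologicalSpace X] : Prop :=
  ∃ P : ℕ → Set X, (∀ n, IsOpen (P n) ∧ (P n).Nonempty) ∧
    ∀ U : Set X, IsOpen U → U.Nonempty → ∃ n, P n ⊆ U

/-- X is perfect: no isolated points. -/
def PerfectPhase (X : Type*) [TopologicalSpace X] : Prop :=
  ∀ x : X, ¬ IsOpen ({x} : Set X)

/-! For each member `W` of the π-base, the open set `⋃ n, interior (f^[n] ⁻¹' W)` is dense: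
transitivity sends every open `U` into `W` under some iterate, and quasi-continuity of that
iterate turns the single point doing so into an open piece of `U` doing so. A point of the
intersection of these sets visits every member of the π-base, so its orbit is dense, and the
intersection is a dense Gδ by the Baire property. -/

theorem QuasiCont.inter_interior_preimage_nonempty {X Y : Type*} [TopologicalSpace X]
    [TopologicalSpace Y] {g : X → Y} (hg : QuasiCont g) {U : Set X} {W : Set Y}
    (hU : IsOpen U) (hW : IsOpen W) (hUW : (g '' U ∩ W).Nonempty) :
    (U ∩ interior (g ⁻¹' W)).Nonempty := by
  obtain ⟨_, ⟨x, hxU, rfl⟩, hxW⟩ := hUW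
  obtain ⟨V, hVopen, ⟨y, hy⟩, hVU, hVW⟩ := hg x W hW hxW U hU hxU
  exact ⟨y, hVU hy, hVopen.subset_interior_iff.2 (image_subset_iff.1 hVW) hy⟩

theorem dense_iUnion_interior_preimage_iterate {X : Type*} [TopologicalSpace X] {f : X → X}
    (hqc : ∀ n : ℕ, QuasiCont (f^[n])) (hTT : TTplus f) {W : Set X} (hW : IsOpen W)
    (hWne : W.Nonempty) : Dense (⋃ n : ℕ, interior (f^[n] ⁻¹' W)) := by
  refine dense_iff_inter_open.2 fun U hU hUne => ?_
  obtain ⟨n, hn⟩ := hTT U W hU hUne hW hWne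
  exact ((hqc n).inter_interior_preimage_nonempty hU hW hn).mono
    (inter_subset_inter_right U (subset_iUnion (fun n => interior (f^[n] ⁻¹' W)) n))

theorem dense_of_inter_nonempty_of_piBase {X ι : Type*} [TopologicalSpace X] {P : ι → Set X}
    (hP : ∀ U : Set X, IsOpen U → U.Nonempty → ∃ k, P k ⊆ U) {S : Set X}
    (hS : ∀ k, (S ∩ P k).Nonempty) : Dense S := by
  refine dense_iff_inter_open.2 fun U hU hUne => ?_
  obtain ⟨k, hk⟩ := hP U hU hUne
  obtain ⟨x, hxS, hxP⟩ := hS k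
  exact ⟨x, hk hxP, hxS⟩

theorem TTplus_implies_residual_trans {X : Type*} [TopologicalSpace X] [BaireSpace X]
    (f : X → X)
    (hpibase : CountablePiBase X)
    (hqc : ∀ n : ℕ, QuasiCont (f^[n]))
    (hTT : TTplus f) :
    ∃ S : Set X, IsGδ S ∧ Dense S ∧
      ∀ x ∈ S, Dense (Set.range fun n : ℕ => f^[n] x) := by
  obtain ⟨P, hP, hPbase⟩ := hpibase
  set D : ℕ → Set X := fun k => ⋃ n : ℕ, interior (f^[n] ⁻¹' P k)
  have hDopen : ∀ k, IsOpen (D k) := fun k => isOpen_iUnion fun n => isOpen_interior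
  have hDdense : ∀ k, Dense (D k) := fun k =>
    dense_iUnion_interior_preimage_iterate hqc hTT (hP k).1 (hP k).2
  refine ⟨⋂ k, D k, .iInter_of_isOpen hDopen, dense_iInter_of_isOpen hDopen hDdense,
    fun x hx => dense_of_inter_nonempty_of_piBase hPbase fun k => ?_⟩
  obtain ⟨n, hn⟩ := mem_iUnion.1 (mem_iInter.1 hx k)
  exact ⟨f^[n] x, ⟨n, rfl⟩, interior_subset (s := f^[n] ⁻¹' P k) hn⟩
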